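/- Fix T > 0, K > 0, r ∈ ℝ, σ > 0, α > 0, and a point (t, x) with 0 ≤ t < T and x > 0. For h > 0 define the Leland-adjusted volatility ν(h) = √(σ² + α/√h), and let Γ_{ν(h)}(t, x) = φ(d₁^{ν(h)}(t, x)) / (x · ν(h) · √(T − t)) denote the Black–Scholes gamma computed with volatility ν(h), where φ is the standard normal density. Then Γ_{ν(h)}(t, x) / √h → 0 as h → 0⁺; in particular Γ_{ν(h)}(t, x) = O(√h) as the time step h tends to zero. -/

import Mathlib

open Filter

/-- The Black–Scholes quantity `d₁` for maturity `T`, strike `K`, rate `r`,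
volatility `ν`. -/
noncomputable def bsD1 (T K r ν t x : ℝ) : ℝ :=
  (Real.log (x / K) + (r + ν ^ 2 / 2) * (T - t)) / (ν * Real.sqrt (T - t))

/-- The Black–Scholes gamma `Γ_ν(t, x) = φ(d₁(t, x)) / (x ν √(T - t))`, where
`φ(u) = e^{-u²/2}/√(2π)` is the standard normal density. -/
noncomputable def bsGamma (T K r ν t x : ℝ) : ℝ :=
  Real.exp (-(bsD1 T K r ν t x) ^ 2 / 2) / Real.sqrt (2 * Real.pi) /
    (x * ν * Real.sqrt (T - t))

/-!
Writing `d₁ = a/ν + bν` with `b = √(T - t)/2` and `2ab = log(x/K) + r(T - t)`, we get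
`d₁² ≥ 2ab + b²ν²`, so `Γ_ν` decays like `exp(-(T - t)ν²/8)` and `Γ_ν ν⁴ → 0` as `ν → ∞`.
Leland's volatility blows up as `h → 0⁺` with `ν(h)⁴ ≥ α²/h`, hence
`Γ_{ν(h)}/√h = Γ_{ν(h)} ν(h)⁴ · (ν(h)⁴ √h)⁻¹` where the last factor is at most `√h/α²`.
-/

open Topology Real

section BlackScholes

variable {T K r ν t x : ℝ}

lemma bsD1_eq_add (hν : ν ≠ 0) (htT : t < T) :
    bsD1 T K r ν t x =
      (log (x / K) + r * (T - t)) / (ν * √(T - t)) + ν * √(T - t) / 2 := by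
  have hτ : √(T - t) ^ 2 = T - t := sq_sqrt (sub_pos.2 htT).le
  have hy : √(T - t) ≠ 0 := (sqrt_pos.2 (sub_pos.2 htT)).ne'
  rw [bsD1]
  field_simp
  rw [hτ]
  ring

lemma add_mul_sq_le_bsD1_sq (hν : ν ≠ 0) (htT : t < T) :
    log (x / K) + r * (T - t) + (T - t) / 4 * ν ^ 2 ≤ bsD1 T K r ν t x ^ 2 := by
  have hτ : √(T - t) ^ 2 = T - t := sq_sqrt (sub_pos.2 htT).le
  have hy : √(T - t) ≠ 0 := (sqrt_pos.2 (sub_pos.2 htT)).ne'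
  rw [bsD1_eq_add hν htT]
  set a := (log (x / K) + r * (T - t)) / (ν * √(T - t))
  have hab : 2 * (a * (ν * √(T - t) / 2)) = log (x / K) + r * (T - t) := by
    simp only [a]
    field_simp
  nlinarith [sq_nonneg a, hτ]

lemma bsGamma_nonneg (hx : 0 ≤ x) (hν : 0 ≤ ν) : 0 ≤ bsGamma T K r ν t x := by
  unfold bsGamma
  positivity

lemma bsGamma_le_mul_exp (hx : 0 < x) (htT : t < T) (hν : 1 ≤ ν) :
    bsGamma T K r ν t x ≤
      exp (-(log (x / K) + r * (T - t)) / 2) / (√(2 * π) * x * √(T - t)) *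
        exp (-((T - t) / 8) * ν ^ 2) := by
  have hy : 0 < √(T - t) := sqrt_pos.2 (sub_pos.2 htT)
  have hexp : exp (-bsD1 T K r ν t x ^ 2 / 2) ≤
      exp (-(log (x / K) + r * (T - t)) / 2) * exp (-((T - t) / 8) * ν ^ 2) := by
    rw [← exp_add, exp_le_exp]
    linarith [add_mul_sq_le_bsD1_sq (K := K) (r := r) (x := x) (by positivity : ν ≠ 0) htT]
  calc bsGamma T K r ν t x
      = exp (-bsD1 T K r ν t x ^ 2 / 2) / (√(2 * π) * x * √(T - t)) / ν := by
        rw [bsGamma]; field_simp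
    _ ≤ exp (-bsD1 T K r ν t x ^ 2 / 2) / (√(2 * π) * x * √(T - t)) :=
        div_le_self (by positivity) hν
    _ ≤ _ := by
        rw [div_mul_eq_mul_div]
        gcongr

lemma tendsto_bsGamma_mul_pow_atTop (hx : 0 < x) (htT : t < T) (n : ℕ) :
    Tendsto (fun ν => bsGamma T K r ν t x * ν ^ n) atTop (𝓝 0) := by
  set C := exp (-(log (x / K) + r * (T - t)) / 2) / (√(2 * π) * x * √(T - t))
  set c := (T - t) / 8
  have hc : 0 < c := by simp only [c]; linarith
  have hdecay : Tendsto (fun ν : ℝ => C / c ^ n * ((c * ν ^ 2) ^ n * exp (-(c * ν ^ 2))))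
      atTop (𝓝 0) := by
    simpa using ((tendsto_pow_mul_exp_neg_atTop_nhds_zero n).comp
      ((tendsto_pow_atTop two_ne_zero).const_mul_atTop hc)).const_mul (C / c ^ n)
  refine squeeze_zero' ?_ ?_ hdecay
  · filter_upwards [eventually_ge_atTop 0] with ν hν
    exact mul_nonneg (bsGamma_nonneg hx.le hν) (pow_nonneg hν n)
  · filter_upwards [eventually_ge_atTop 1] with ν hν
    have hpow : ν ^ n ≤ (ν ^ 2) ^ n := pow_le_pow_left₀ (by linarith) (by nlinarith) n
    calc bsGamma T K r ν t x * ν ^ n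
        ≤ C * exp (-c * ν ^ 2) * (ν ^ 2) ^ n :=
          mul_le_mul (bsGamma_le_mul_exp hx htT hν) hpow (by positivity) (by positivity)
      _ = C / c ^ n * ((c * ν ^ 2) ^ n * exp (-(c * ν ^ 2))) := by
          field_simp
          ring_nf

end BlackScholes

section Leland

noncomputable def lelandVol (σ α h : ℝ) : ℝ := √(σ ^ 2 + α / √h)

variable {σ α : ℝ}

lemma tendsto_lelandVol_atTop (hα : 0 < α) :
    Tendsto (lelandVol σ α) (𝓝[>] 0) atTop := by
  have hsqrt : Tendsto (√·) (𝓝[>] (0 : ℝ)) (𝓝[>] 0) :=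
    tendsto_nhdsWithin_of_tendsto_nhds_of_eventually_within _
      (by simpa using continuous_sqrt.tendsto 0 |>.mono_left nhdsWithin_le_nhds)
      (eventually_nhdsWithin_of_forall fun h hh => sqrt_pos.2 hh)
  have hinv : Tendsto (fun h => α / √h) (𝓝[>] 0) atTop := by
    simpa [div_eq_mul_inv] using (tendsto_inv_nhdsGT_zero.comp hsqrt).const_mul_atTop hα
  exact tendsto_sqrt_atTop.comp (tendsto_atTop_add_const_left _ _ hinv)

lemma inv_lelandVol_pow_four_mul_sqrt_le (hα : 0 < α) {h : ℝ} (hh : 0 < h) :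
    (lelandVol σ α h ^ 4 * √h)⁻¹ ≤ √h / α ^ 2 := by
  have hs : 0 < √h := sqrt_pos.2 hh
  have hvol : lelandVol σ α h ^ 4 = (σ ^ 2 + α / √h) ^ 2 := by
    rw [lelandVol, show (4 : ℕ) = 2 * 2 from rfl, pow_mul, sq_sqrt (by positivity)]
  have hlow : α ^ 2 / √h ^ 2 ≤ (σ ^ 2 + α / √h) ^ 2 := by
    rw [← div_pow]
    gcongr
    linarith [sq_nonneg σ]
  rw [hvol, inv_le_comm₀ (by positivity) (by positivity), inv_div]
  calc α ^ 2 / √h = α ^ 2 / √h ^ 2 * √h := by field_simp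
    _ ≤ _ := by gcongr

lemma tendsto_inv_lelandVol_pow_four_mul_sqrt (hα : 0 < α) :
    Tendsto (fun h => (lelandVol σ α h ^ 4 * √h)⁻¹) (𝓝[>] 0) (𝓝 0) := by
  have hbound : Tendsto (fun h => √h / α ^ 2) (𝓝[>] 0) (𝓝 0) := by
    simpa using ((continuous_sqrt.tendsto 0).mono_left nhdsWithin_le_nhds).div_const (α ^ 2)
  refine squeeze_zero' ?_ ?_ hbound
  · filter_upwards with h
    positivity
  · filter_upwards [self_mem_nhdsWithin] with h hh
    exact inv_lelandVol_pow_four_mul_sqrt_le hα hh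

end Leland

theorem leland_gamma_div_sqrt_tendsto_zero_general
    (T K r σ α t x : ℝ) (hα : 0 < α)
    (htT : t < T) (hx : 0 < x) :
    Tendsto
      (fun h : ℝ =>
        bsGamma T K r (Real.sqrt (σ ^ 2 + α / Real.sqrt h)) t x / Real.sqrt h)
      (nhdsWithin 0 (Set.Ioi 0)) (nhds 0) := by
  have hgamma := (tendsto_bsGamma_mul_pow_atTop (K := K) (r := r) hx htT 4).comp
    (tendsto_lelandVol_atTop (σ := σ) hα)
  have hprod := hgamma.mul (tendsto_inv_lelandVol_pow_four_mul_sqrt (σ := σ) hα)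
  rw [mul_zero] at hprod
  refine hprod.congr' ?_
  filter_upwards [self_mem_nhdsWithin] with h hh
  have hs : 0 < √h := sqrt_pos.2 hh
  have hvol : 0 < √(σ ^ 2 + α / √h) := sqrt_pos.2 (by positivity)
  simp only [Function.comp_apply, lelandVol]
  field_simp

/-- With the Leland-adjusted volatility `ν(h) = √(σ² + α/√h)`, the Black–Scholes gamma at a
fixed point `(t, x)` satisfies `Γ_{ν(h)}(t, x) / √h → 0` as the time step `h → 0⁺`; in
particular `Γ_{ν(h)}(t, x) = O(√h)`. -/
theorem leland_gamma_div_sqrt_tendsto_zero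
    (T K r σ α t x : ℝ) (hT : 0 < T) (hK : 0 < K) (hσ : 0 < σ) (hα : 0 < α)
    (ht0 : 0 ≤ t) (htT : t < T) (hx : 0 < x) :
    Tendsto
      (fun h : ℝ =>
        bsGamma T K r (Real.sqrt (σ ^ 2 + α / Real.sqrt h)) t x / Real.sqrt h)
      (nhdsWithin 0 (Set.Ioi 0)) (nhds 0) :=
  leland_gamma_div_sqrt_tendsto_zero_general T K r σ α t x hα htT hx
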